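/- The closure of the set { bar h_{B₁} ∘ bar h_{B₂} ∘ ⋯ ∘ bar h_{B_n}(0) : n ≥ 1, B₁,…,B_n ∈ 𝒜 } of all finite compositions of dual inverse branches applied to 0 equals the interval [√3 − 2, √3]. -/

import Mathlib

open MeasureTheory Real Set Filter Topology

namespace SCF

/-- The involution `ι(x) = (1−x)/(1+x)`. -/
noncomputable def iota (x : ℝ) : ℝ := (1 - x) / (1 + x)

/-- Even continued-fraction step.  For `y ∈ (0,1/2]` one has
`⌊(1/y+1)/2⌋ = k` whenever `1/y ∈ (2k−1, 2k+1)`, so `Te y = |1/y − 2k|`;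
explicitly `Te y = 1/y − 2` on `[1/3,1/2]`, `Te y = 1/y − 2k` on
`[1/(2k+1), 1/(2k))` and `Te y = 2k − 1/y` on `[1/(2k), 1/(2k−1))` (`k ≥ 2`). -/
noncomputable def Te (y : ℝ) : ℝ := |1 / y - 2 * (⌊(1 / y + 1) / 2⌋ : ℝ)|

/-- The spliced continued fraction (SCF) map `T : [0,1] → [0,1]`, with
`T 0 = 0`, `T 1 = 1`.  On `(0,1/2]` it is the even continued fraction map
(see `Te`), and on `(1/2,1)` it is the odd–odd map, which is the conjugate
`ι ∘ Te ∘ ι` of the even map; this agrees with the branchwise definition: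
`T x = (k x − (k−1))/(k − (k+1) x)` on `((k−1)/k, (2k−1)/(2k+1)]` and
`T x = (k − (k+1) x)/(k x − (k−1))` on `((2k−1)/(2k+1), k/(k+1)]` for `k ≥ 2`. -/
noncomputable def T (x : ℝ) : ℝ :=
  if x ≤ 0 then 0
  else if 1 ≤ x then 1
  else if x ≤ 1 / 2 then Te x
  else iota (Te (iota x))

/-- Parity label of a digit: `e` (even cusp) or `o` (odd–odd cusp). -/
inductive Par | e | o
deriving DecidableEq

/-- A candidate SCF digit `(a, ε)_s`. -/
structure Digit where
  a : ℤ
  eps : ℤ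
  s : Par
deriving DecidableEq

/-- The digit set `𝒜 = {(k,ε)_s : k ≥ 2, ε = ±1, s ∈ {e,o}} ∪ {(1,+1)_e}`. -/
def Digit.Valid (d : Digit) : Prop :=
  (2 ≤ d.a ∧ (d.eps = 1 ∨ d.eps = -1)) ∨ (d.a = 1 ∧ d.eps = 1 ∧ d.s = Par.e)

/-- The branch intervals `I_{(a,ε)_s}` of the SCF map. -/
noncomputable def branch (d : Digit) : Set ℝ :=
  match d.s with
  | Par.e =>
      if d.a = 1 then Set.Icc (1/3 : ℝ) (1/2)
      else if d.eps = 1 then Set.Ico (1 / (2 * (d.a : ℝ) + 1)) (1 / (2 * (d.a : ℝ)))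
      else Set.Ico (1 / (2 * (d.a : ℝ))) (1 / (2 * (d.a : ℝ) - 1))
  | Par.o =>
      if d.eps = 1 then
        Set.Ioc ((2 * (d.a : ℝ) - 1) / (2 * (d.a : ℝ) + 1)) ((d.a : ℝ) / ((d.a : ℝ) + 1))
      else
        Set.Ioc (((d.a : ℝ) - 1) / (d.a : ℝ)) ((2 * (d.a : ℝ) - 1) / (2 * (d.a : ℝ) + 1))

open Classical in
/-- The SCF digit of a point `y` (the unique valid digit `d` with `y ∈ I_d`;
well defined for every `y ∈ (0,1)`). -/
noncomputable def digit (y : ℝ) : Digit :=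
  if h : ∃ d : Digit, d.Valid ∧ y ∈ branch d then h.choose else ⟨1, 1, Par.e⟩

/-- The `n`-th SCF digit `(a_n(x), ε_n(x))_{s_n(x)}` of `x`, `n ≥ 1`,
determined by `T^[n−1] x ∈ I_{(a_n,ε_n)_{s_n}}`. -/
noncomputable def dig (n : ℕ) (x : ℝ) : Digit := digit (T^[n - 1] x)

/-- The `n`-th SCF partial quotient `a_n(x)`. -/
noncomputable def a (n : ℕ) (x : ℝ) : ℤ := (dig n x).a

/-- The invariant density `f_μ`. -/
noncomputable def fdens (x : ℝ) : ℝ :=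
  2 / (Real.log (2 + Real.sqrt 3) * (1 - (2 - Real.sqrt 3) * x) * (1 + Real.sqrt 3 * x))

/-- The absolutely continuous `T`-invariant probability measure `μ` on `(0,1)`. -/
noncomputable def mu : Measure ℝ :=
  (volume.restrict (Set.Ioo (0 : ℝ) 1)).withDensity fun x => ENNReal.ofReal (fdens x)

/-- The inverse branches `h_{(a,ε)_s}` of the SCF map `T`. -/
noncomputable def h (d : Digit) (x : ℝ) : ℝ :=
  match d.s with
  | Par.e => 1 / (2 * (d.a : ℝ) + (d.eps : ℝ) * x)
  | Par.o =>
      if d.eps = 1 then (((d.a : ℝ) - 1) * x + (d.a : ℝ)) / ((d.a : ℝ) * x + ((d.a : ℝ) + 1))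
      else ((d.a : ℝ) * x + ((d.a : ℝ) - 1)) / (((d.a : ℝ) + 1) * x + (d.a : ℝ))

/-- Composed inverse branch `h_{A^{(n)}} = h_{A₁} ∘ ⋯ ∘ h_{A_n}` of a word. -/
noncomputable def hWord (l : List Digit) : ℝ → ℝ :=
  l.foldr (fun d g => h d ∘ g) id

/-- The dual inverse branches `bar h_{(b,η)_t}`. -/
noncomputable def hbar (d : Digit) (y : ℝ) : ℝ :=
  match d.s with
  | Par.e => (d.eps : ℝ) / (2 * (d.a : ℝ) + y)
  | Par.o =>
      1 / (1 + (d.eps : ℝ) / (((d.a : ℝ) - ((max 0 d.eps : ℤ) : ℝ)) + 1 / (1 + y)))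

/-- The matrix `M_{(a,ε)_s}` associated with the inverse branch `h_{(a,ε)_s}`. -/
noncomputable def Mdig (d : Digit) : Matrix (Fin 2) (Fin 2) ℝ :=
  match d.s with
  | Par.e => !![0, 1; (d.eps : ℝ), 2 * (d.a : ℝ)]
  | Par.o =>
      !![(d.a : ℝ) - ((max 0 d.eps : ℤ) : ℝ), (d.a : ℝ) - ((max 0 d.eps : ℤ) : ℝ) + (d.eps : ℝ);
         (d.a : ℝ) - ((max 0 d.eps : ℤ) : ℝ) + 1, (d.a : ℝ) - ((max 0 d.eps : ℤ) : ℝ) + (d.eps : ℝ) + 1]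

/-- `M_n(x) = M_{(a₁,ε₁)_{s₁}} ⋯ M_{(a_n,ε_n)_{s_n}}`. -/
noncomputable def Mn (n : ℕ) (x : ℝ) : Matrix (Fin 2) (Fin 2) ℝ :=
  ((List.range n).map fun i => Mdig (digit (T^[i] x))).prod

/-- `P_n(x)`: the `(1,2)`-entry of `M_n(x)` (numerator of the `n`-th convergent). -/
noncomputable def Pc (n : ℕ) (x : ℝ) : ℝ := Mn n x 0 1

/-- `Q_n(x)`: the `(2,2)`-entry of `M_n(x)` (denominator of the `n`-th convergent). -/
noncomputable def Qc (n : ℕ) (x : ℝ) : ℝ := Mn n x 1 1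

end SCF

/-!
Each valid dual branch `hbar d` agrees on `[√3 - 2, ∞)` with the Möbius map of the transposed
matrix `(Mdig d)ᵀ`. That matrix has determinant `±1` and its denominator is at least `√3` on this
ray, so `hbar d` maps `[√3 - 2, √3]` into itself and contracts it by the factor `1/3`. The
images of the interval under the branches cover all of it except `0` and `1`, and these two points
are limits of `hbar (n,1)_e 0 = 1/(2n)` and `hbar (n,1)_o 0 = n/(n+1)`. So every point of the
interval lies within `3⁻ⁿ · diam` of the closure of the orbit of `0`, which is invariant under
the branches and contains `0` and `1`.
-/

section ContractingCover

open Metric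

variable {X ι : Type*} [MetricSpace X]

theorem LipschitzOnWith.infDist_le_mul {f : X → X} {J K : Set X} {c : NNReal}
    (hf : LipschitzOnWith c f J) (hfK : MapsTo f K K) (hKJ : K ⊆ J) (hK : K.Nonempty)
    {y : X} (hy : y ∈ J) : infDist (f y) K ≤ c * infDist y K := by
  have : Nonempty K := hK.to_subtype
  rw [infDist_eq_iInf (x := y), Real.mul_iInf_of_nonneg c.coe_nonneg]
  refine le_ciInf fun k => ?_
  calc infDist (f y) K ≤ dist (f y) (f k) := infDist_le_dist_of_mem (hfK k.2)
    _ ≤ c * dist y k := hf.dist_le_mul y hy k (hKJ k.2)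

theorem subset_of_contracting_cover {f : ι → X → X} {J K : Set X} {c : NNReal} (hc : c < 1)
    (hJ : Bornology.IsBounded J) (hK : IsClosed K) (hK₀ : K.Nonempty) (hKJ : K ⊆ J)
    (hf : ∀ i, LipschitzOnWith c (f i) J) (hfK : ∀ i, MapsTo (f i) K K)
    (hcover : J ⊆ K ∪ ⋃ i, f i '' J) : J ⊆ K := by
  have hdecay : ∀ n : ℕ, ∀ x ∈ J, infDist x K ≤ c ^ n * diam J := by
    intro n
    induction n with
    | zero =>
      intro x hx
      obtain ⟨k, hk⟩ := hK₀
      simpa using (infDist_le_dist_of_mem hk).trans (dist_le_diam_of_mem hJ hx (hKJ hk))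
    | succ n ih =>
      intro x hx
      rcases hcover hx with hxK | hx
      · rw [infDist_zero_of_mem hxK]
        positivity
      obtain ⟨i, y, hy, rfl⟩ : ∃ i, ∃ y ∈ J, f i y = x := by simpa using hx
      calc infDist (f i y) K ≤ c * infDist y K := (hf i).infDist_le_mul (hfK i) hKJ hK₀ hy
        _ ≤ c * (c ^ n * diam J) := by gcongr; exact ih y hy
        _ = c ^ (n + 1) * diam J := by ring
  intro x hx
  have hlim : Tendsto (fun n : ℕ => (c : ℝ) ^ n * diam J) atTop (𝓝 0) := by
    simpa using (tendsto_pow_atTop_nhds_zero_of_lt_one c.coe_nonneg hc).mul_const (diam J)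
  exact (hK.mem_iff_infDist_zero hK₀).2
    (le_antisymm (ge_of_tendsto' hlim fun n => hdecay n x hx) infDist_nonneg)

theorem closure_eq_of_contracting_cover {f : ι → X → X} {S J : Set X} {c : NNReal} (hc : c < 1)
    (hJ : Bornology.IsBounded J) (hJc : IsClosed J) (hS : S.Nonempty) (hSJ : S ⊆ J)
    (hf : ∀ i, LipschitzOnWith c (f i) J) (hfS : ∀ i, MapsTo (f i) S S)
    (hcover : J ⊆ closure S ∪ ⋃ i, f i '' J) : closure S = J := by
  have hSJ' : closure S ⊆ J := closure_minimal hSJ hJc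
  exact hSJ'.antisymm <| subset_of_contracting_cover hc hJ isClosed_closure hS.closure hSJ' hf
    (fun i => (hfS i).closure_of_continuousOn ((hf i).continuousOn.mono hSJ')) hcover

end ContractingCover

namespace SCF

open scoped Matrix

local notation "𝕁" => Set.Icc (√3 - 2) (√3)

theorem sq_sqrt_three : √3 ^ 2 = 3 := Real.sq_sqrt (by norm_num)

theorem one_lt_sqrt_three : 1 < √3 := by nlinarith [Real.sqrt_nonneg 3, sq_sqrt_three]

theorem sqrt_three_lt_two : √3 < 2 := by nlinarith [Real.sqrt_nonneg 3, sq_sqrt_three]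

theorem Digit.Valid.cases {d : Digit} (hd : d.Valid) :
    (∃ a, 1 ≤ a ∧ d = ⟨a, 1, .e⟩) ∨ (∃ a, 2 ≤ a ∧ d = ⟨a, -1, .e⟩) ∨
      (∃ a, 2 ≤ a ∧ d = ⟨a, 1, .o⟩) ∨ (∃ a, 2 ≤ a ∧ d = ⟨a, -1, .o⟩) := by
  obtain ⟨a, ε, s⟩ := d
  rcases hd with ⟨ha, rfl | rfl⟩ | ⟨rfl, rfl, hs⟩ <;> cases s
  · exact Or.inl ⟨a, one_le_two.trans ha, rfl⟩
  · exact Or.inr <| Or.inr <| Or.inl ⟨a, ha, rfl⟩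
  · exact Or.inr <| Or.inl ⟨a, ha, rfl⟩
  · exact Or.inr <| Or.inr <| Or.inr ⟨a, ha, rfl⟩
  · exact Or.inl ⟨1, le_rfl, rfl⟩
  · cases hs

theorem Digit.valid_mk_one_e {a : ℤ} (ha : 1 ≤ a) : Digit.Valid ⟨a, 1, .e⟩ := by
  rcases ha.eq_or_lt with rfl | ha
  exacts [Or.inr ⟨rfl, rfl, rfl⟩, Or.inl ⟨ha, Or.inl rfl⟩]

noncomputable def mobius (M : Matrix (Fin 2) (Fin 2) ℝ) (y : ℝ) : ℝ :=
  (M 0 0 * y + M 0 1) / (M 1 0 * y + M 1 1)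

theorem mobius_sub_mobius (M : Matrix (Fin 2) (Fin 2) ℝ) {u v : ℝ}
    (hu : M 1 0 * u + M 1 1 ≠ 0) (hv : M 1 0 * v + M 1 1 ≠ 0) :
    mobius M u - mobius M v = M.det * (u - v) / ((M 1 0 * u + M 1 1) * (M 1 0 * v + M 1 1)) := by
  rw [mobius, mobius, div_sub_div _ _ hu hv, Matrix.det_fin_two]
  ring

theorem dist_mobius_le {M : Matrix (Fin 2) (Fin 2) ℝ} {r u v : ℝ}
    (hr : 0 < r) (hdet : |M.det| ≤ 1)
    (hu : r ≤ M 1 0 * u + M 1 1) (hv : r ≤ M 1 0 * v + M 1 1) :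
    dist (mobius M u) (mobius M v) ≤ dist u v / r ^ 2 := by
  have hu₀ : 0 < M 1 0 * u + M 1 1 := hr.trans_le hu
  have hv₀ : 0 < M 1 0 * v + M 1 1 := hr.trans_le hv
  rw [Real.dist_eq, Real.dist_eq, mobius_sub_mobius M hu₀.ne' hv₀.ne', abs_div, abs_mul,
    abs_of_pos (mul_pos hu₀ hv₀), sq]
  gcongr
  calc |M.det| * |u - v| ≤ 1 * |u - v| := by gcongr
    _ = |u - v| := one_mul _

theorem hbar_eq_mobius {d : Digit} (hd : d.Valid) {y : ℝ} (hy : -1 < y) :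
    hbar d y = mobius (Mdig d)ᵀ y := by
  have hy₀ : 0 < 1 + y := by linarith
  rcases hd.cases with ⟨a, -, rfl⟩ | ⟨a, -, rfl⟩ | ⟨a, ha, rfl⟩ | ⟨a, ha, rfl⟩ <;>
    simp only [hbar, mobius, Mdig] <;> norm_num
  · ring
  · ring
  · have hA : (2 : ℝ) ≤ a := by exact_mod_cast ha
    have hN : ((a - 1) * y + a : ℝ) ≠ 0 := by nlinarith
    have e : (a - 1 + (1 + y)⁻¹ : ℝ) = ((a - 1) * y + a) / (1 + y) := by field_simp; ring
    rw [inv_eq_iff_eq_inv, inv_div, e]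
    field_simp
    ring
  · have hA : (2 : ℝ) ≤ a := by exact_mod_cast ha
    have hN : (a * y + (a + 1) : ℝ) ≠ 0 := by nlinarith
    have e : (a + (1 + y)⁻¹ : ℝ) = (a * y + (a + 1)) / (1 + y) := by field_simp; ring
    rw [inv_eq_iff_eq_inv, inv_div, e]
    field_simp
    ring

theorem abs_det_Mdig {d : Digit} (hd : d.Valid) : |(Mdig d).det| = 1 := by
  rcases hd.cases with ⟨a, -, rfl⟩ | ⟨a, -, rfl⟩ | ⟨a, -, rfl⟩ | ⟨a, -, rfl⟩ <;>
    simp [Mdig, Matrix.det_fin_two]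
  all_goals ring_nf; norm_num

theorem sqrt_three_le_mobius_den_Mdig {d : Digit} (hd : d.Valid) {y : ℝ} (hy : √3 - 2 ≤ y) :
    √3 ≤ (Mdig d)ᵀ 1 0 * y + (Mdig d)ᵀ 1 1 := by
  have := one_lt_sqrt_three
  rcases hd.cases with ⟨a, ha, rfl⟩ | ⟨a, ha, rfl⟩ | ⟨a, ha, rfl⟩ | ⟨a, ha, rfl⟩ <;>
    simp [Mdig]
  · have hA : (1 : ℝ) ≤ a := by exact_mod_cast ha
    linarith
  · have hA : (2 : ℝ) ≤ a := by exact_mod_cast ha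
    linarith
  all_goals
    have hA : (2 : ℝ) ≤ a := by exact_mod_cast ha
    nlinarith [mul_nonneg (by linarith : (0 : ℝ) ≤ a - 1) (by linarith : 0 ≤ y - (√3 - 2)),
      mul_nonneg (by linarith : (0 : ℝ) ≤ a - 2) (by linarith : 0 ≤ √3 - 1)]

theorem lipschitzOnWith_hbar {d : Digit} (hd : d.Valid) :
    LipschitzOnWith (1 / 3) (hbar d) (Ici (√3 - 2)) := by
  refine LipschitzOnWith.of_dist_le_mul fun u hu v hv => ?_
  have hu' : -1 < u := by linarith [mem_Ici.1 hu, one_lt_sqrt_three]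
  have hv' : -1 < v := by linarith [mem_Ici.1 hv, one_lt_sqrt_three]
  rw [hbar_eq_mobius hd hu', hbar_eq_mobius hd hv']
  calc dist (mobius (Mdig d)ᵀ u) (mobius (Mdig d)ᵀ v) ≤ dist u v / √3 ^ 2 :=
        dist_mobius_le (by positivity) (by rw [Matrix.det_transpose, abs_det_Mdig hd])
          (sqrt_three_le_mobius_den_Mdig hd hu) (sqrt_three_le_mobius_den_Mdig hd hv)
    _ = (1 / 3 : NNReal) * dist u v := by rw [sq_sqrt_three]; push_cast; ring

theorem mapsTo_hbar {d : Digit} (hd : d.Valid) : MapsTo (hbar d) 𝕁 𝕁 := by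
  intro y hy
  have h₁ := one_lt_sqrt_three
  have h₂ := sqrt_three_lt_two
  have h₃ := sq_sqrt_three
  have hD := sqrt_three_le_mobius_den_Mdig hd hy.1
  rw [hbar_eq_mobius hd (by linarith [hy.1]), mem_Icc, mobius, le_div_iff₀ (by linarith),
    div_le_iff₀ (by linarith)]
  obtain ⟨hy₁, hy₂⟩ := hy
  rcases hd.cases with ⟨a, ha, rfl⟩ | ⟨a, ha, rfl⟩ | ⟨a, ha, rfl⟩ | ⟨a, ha, rfl⟩ <;>
    simp [Mdig] at hD ⊢
  · constructor <;> nlinarith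
  · have hA : (2 : ℝ) ≤ a := by exact_mod_cast ha
    constructor <;>
      nlinarith [mul_nonneg (by linarith : 0 ≤ 2 - √3) (by linarith : 0 ≤ y + 2 * a - (√3 + 2))]
  · have hA : (2 : ℝ) ≤ a := by exact_mod_cast ha
    constructor <;> nlinarith
  · have hA : (2 : ℝ) ≤ a := by exact_mod_cast ha
    constructor <;>
      nlinarith [mul_nonneg (by linarith : (0 : ℝ) ≤ a - 1) (by linarith : 0 ≤ √3 - y),
        mul_nonneg (by linarith : (0 : ℝ) ≤ a - 2) (by linarith : 0 ≤ y - (√3 - 2))]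

theorem exists_mem_image_hbar_even {ε : ℤ} (hε : ε ≠ 0) (x : ℝ) :
    ∃ a : ℤ, ε / x - √3 < 2 * a ∧ x ∈ hbar ⟨a, ε, .e⟩ '' 𝕁 := by
  obtain ⟨a, ha⟩ := (existsUnique_sub_zsmul_mem_Ico two_pos (ε / x) (√3 - 2)).exists
  rw [zsmul_eq_mul, sub_add_cancel] at ha
  refine ⟨a, by linarith [ha.2], _, Ico_subset_Icc_self ha, ?_⟩
  rw [hbar, show 2 * (a : ℝ) + (ε / x - a * 2) = ε / x by ring,
    div_div_cancel₀ (Int.cast_ne_zero.2 hε)]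

theorem one_div_sub_one_mem_Icc {w : ℝ} (hw : w ∈ Icc ((√3 - 1) / 2) ((√3 + 1) / 2)) :
    1 / w - 1 ∈ 𝕁 := by
  have h₁ := one_lt_sqrt_three
  have h₂ := sq_sqrt_three
  have hw₀ : 0 < w := by linarith [hw.1]
  constructor
  · rw [le_sub_iff_add_le, le_div_iff₀ hw₀]; nlinarith [hw.2]
  · rw [sub_le_iff_le_add, div_le_iff₀ hw₀]; nlinarith [hw.1]

/-- `hbar (a, ε)_o y = x` means `(a - max 0 ε) + 1 / (1 + y) = ε x / (1 - x)`, and `1 / (1 + y)`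
runs through `[(√3 - 1) / 2, (√3 + 1) / 2]`, an interval of length one, as `y` runs through `𝕁`. -/
theorem exists_mem_image_hbar_odd {ε : ℤ} (hε : ε ≠ 0) {x : ℝ} (hx₀ : x ≠ 0) (hx₁ : x ≠ 1) :
    ∃ a : ℤ, ε * x / (1 - x) - (√3 + 1) / 2 < a - max 0 ε ∧ x ∈ hbar ⟨a, ε, .o⟩ '' 𝕁 := by
  obtain ⟨b, hb⟩ :=
    (existsUnique_sub_zsmul_mem_Ico one_pos (ε * x / (1 - x)) ((√3 - 1) / 2)).exists
  rw [zsmul_eq_mul, mul_one, show (√3 - 1) / 2 + 1 = (√3 + 1) / 2 by ring] at hb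
  refine ⟨b + max 0 ε, by push_cast; linarith [hb.2], _,
    one_div_sub_one_mem_Icc (Ico_subset_Icc_self hb), ?_⟩
  simp only [hbar]
  push_cast
  rw [add_sub_cancel, one_div_one_div, add_sub_cancel_right, add_sub_cancel,
    show (ε : ℝ) / (ε * x / (1 - x)) = (1 - x) / x by field_simp]
  field_simp
  ring

theorem mem_image_hbar_of_ne {x : ℝ} (hx : x ∈ 𝕁) (hx₀ : x ≠ 0) (hx₁ : x ≠ 1) :
    ∃ d : Digit, d.Valid ∧ x ∈ hbar d '' 𝕁 := by
  have h₁ := one_lt_sqrt_three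
  have h₂ := sq_sqrt_three
  obtain ⟨hxl, hxu⟩ := hx
  rcases hx₀.lt_or_gt with hneg | hpos
  · obtain ⟨a, ha, hx⟩ := exists_mem_image_hbar_even (ε := -1) (by norm_num) x
    have : 2 + √3 ≤ -1 / x := by rw [le_div_iff_of_neg hneg]; nlinarith
    have ha₂ : (1 : ℤ) < a := by push_cast at ha; exact_mod_cast (by linarith : (1 : ℝ) < a)
    exact ⟨⟨a, -1, .e⟩, Or.inl ⟨ha₂, Or.inr rfl⟩, hx⟩
  rcases le_or_gt (√3 * x) 1 with hsmall | hlarge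
  · obtain ⟨a, ha, hx⟩ := exists_mem_image_hbar_even (ε := 1) one_ne_zero x
    have : √3 ≤ 1 / x := by rw [le_div_iff₀ hpos]; linarith
    have ha₁ : (0 : ℤ) < a := by push_cast at ha; exact_mod_cast (by linarith : (0 : ℝ) < a)
    exact ⟨_, Digit.valid_mk_one_e ha₁, hx⟩
  rcases hx₁.lt_or_gt with hlt | hgt
  · obtain ⟨a, ha, hx⟩ := exists_mem_image_hbar_odd (ε := 1) one_ne_zero hx₀ hx₁
    have : (√3 + 1) / 2 ≤ x / (1 - x) := by
      rw [le_div_iff₀ (by linarith)]; nlinarith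
    have ha₂ : (1 : ℤ) < a := by norm_num at ha; exact_mod_cast (by linarith : (1 : ℝ) < a)
    exact ⟨⟨a, 1, .o⟩, Or.inl ⟨ha₂, Or.inl rfl⟩, hx⟩
  · obtain ⟨a, ha, hx⟩ := exists_mem_image_hbar_odd (ε := -1) (by norm_num) hx₀ hx₁
    have : (√3 + 3) / 2 ≤ -x / (1 - x) := by
      rw [le_div_iff_of_neg (by linarith)]; nlinarith
    have ha₂ : (1 : ℤ) < a := by norm_num at ha; exact_mod_cast (by linarith : (1 : ℝ) < a)
    exact ⟨⟨a, -1, .o⟩, Or.inl ⟨ha₂, Or.inr rfl⟩, hx⟩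

def dualPoints : Set ℝ :=
  {z | ∃ l : List Digit, l ≠ [] ∧ (∀ d ∈ l, d.Valid) ∧ z = l.foldr (fun d y => hbar d y) 0}

theorem mapsTo_hbar_dualPoints {d : Digit} (hd : d.Valid) :
    MapsTo (hbar d) dualPoints dualPoints := by
  rintro _ ⟨l, -, hl, rfl⟩
  exact ⟨d :: l, List.cons_ne_nil _ _, List.forall_mem_cons.2 ⟨hd, hl⟩, rfl⟩

theorem hbar_zero_mem_dualPoints {d : Digit} (hd : d.Valid) : hbar d 0 ∈ dualPoints :=
  ⟨[d], List.cons_ne_nil _ _, List.forall_mem_singleton.2 hd, rfl⟩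

theorem foldr_hbar_mem {l : List Digit} (hl : ∀ d ∈ l, d.Valid) {y : ℝ} (hy : y ∈ 𝕁) :
    l.foldr (fun d y => hbar d y) y ∈ 𝕁 := by
  induction l with
  | nil => exact hy
  | cons d l ih =>
    rw [List.forall_mem_cons] at hl
    exact mapsTo_hbar hl.1 (ih hl.2)

theorem dualPoints_subset : dualPoints ⊆ 𝕁 := by
  rintro _ ⟨l, -, hl, rfl⟩
  exact foldr_hbar_mem hl ⟨by linarith [sqrt_three_lt_two], Real.sqrt_nonneg 3⟩

theorem zero_mem_closure_dualPoints : (0 : ℝ) ∈ closure dualPoints := by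
  refine mem_closure_of_tendsto (f := fun n : ℕ => hbar ⟨n, 1, .e⟩ 0) (b := atTop) ?_ ?_
  · have hf : (fun n : ℕ => hbar ⟨n, 1, .e⟩ 0) = fun n : ℕ => (1 / 2 : ℝ) / n := by
      ext n; simp only [hbar]; push_cast; ring
    rw [hf]
    exact tendsto_const_div_atTop_nhds_zero_nat _
  · filter_upwards [eventually_ge_atTop 1] with n hn
    exact hbar_zero_mem_dualPoints (Digit.valid_mk_one_e (by exact_mod_cast hn))

theorem one_mem_closure_dualPoints : (1 : ℝ) ∈ closure dualPoints := by
  refine mem_closure_of_tendsto (f := fun n : ℕ => hbar ⟨n, 1, .o⟩ 0) (b := atTop) ?_ ?_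
  · have hf : (fun n : ℕ => hbar ⟨n, 1, .o⟩ 0) = fun n : ℕ => (1 + (n : ℝ)⁻¹)⁻¹ := by
      ext n; simp [hbar]
    rw [hf]
    simpa using ((tendsto_inv_atTop_nhds_zero_nat (𝕜 := ℝ)).const_add 1).inv₀ (by norm_num)
  · filter_upwards [eventually_ge_atTop 2] with n hn
    exact hbar_zero_mem_dualPoints (Or.inl ⟨(by exact_mod_cast hn : (2 : ℤ) ≤ n), Or.inl rfl⟩)

/-- the closure of the set of all finite compositions
`bar h_{B₁} ∘ ⋯ ∘ bar h_{B_n} (0)` of dual inverse branches applied to `0`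
equals `[√3 − 2, √3]`. -/
theorem dual_domain_eq_Icc :
    closure {z : ℝ | ∃ l : List Digit, l ≠ [] ∧ (∀ d ∈ l, d.Valid) ∧
        z = l.foldr (fun d y => hbar d y) 0} =
      Set.Icc (Real.sqrt 3 - 2) (Real.sqrt 3) := by
  refine closure_eq_of_contracting_cover (f := fun d : {d : Digit // d.Valid} => hbar d)
    (c := 1 / 3) (by norm_num) (Metric.isBounded_Icc _ _) isClosed_Icc
    ⟨_, hbar_zero_mem_dualPoints (Digit.valid_mk_one_e le_rfl)⟩ dualPoints_subset
    (fun d => (lipschitzOnWith_hbar d.2).mono fun y hy => hy.1)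
    (fun d => mapsTo_hbar_dualPoints d.2) fun x hx => ?_
  rcases eq_or_ne x 0 with rfl | h₀
  · exact Or.inl zero_mem_closure_dualPoints
  rcases eq_or_ne x 1 with rfl | h₁
  · exact Or.inl one_mem_closure_dualPoints
  obtain ⟨d, hd, hx⟩ := mem_image_hbar_of_ne hx h₀ h₁
  exact Or.inr (mem_iUnion.2 ⟨⟨d, hd⟩, hx⟩)

end SCF
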